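/- If n ≥ 3 is even and k ≥ 1 is odd, then there is no combinatorial degenerated magic polygon D(n,k); that is, no labels x, root label c, and magic sum u satisfy the defining conditions. -/

import Mathlib

/-!
Comparing the first edge of each of the `k` polygons with the first `k + 1` segments through
the root shows that the magic sum is `u = (k + 1) c`. Summing all segments then gives the total
of the labels as `N c`, where `N = k²(n − 2) + k + 1` is the number of labels; since the labels
are `1, …, N`, this total is also `N (N + 1) / 2`, so `N + 1 = 2 c`. But `N` is even when `n`
is even and `k` is odd.
-/

/-- The labeling function of a combinatorial degenerated magic polygon `D(n,k)`:
the labels `x t p` of the points on the `k` polygons (root vertex excluded)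
together with the root label `c`. -/
def degMagicLabels (n k : ℕ) (x : Fin k → Fin (k * (n - 2) + 1) → ℕ) (c : ℕ) :
    (Fin k × Fin (k * (n - 2) + 1)) ⊕ Unit → ℕ :=
  Sum.elim (fun q => x q.1 q.2) (fun _ => c)

/-- `(x, c, u)` is a combinatorial degenerated magic polygon `D(n,k)`:
(1) the `k²(n−2)+k+1` labels are exactly `1, …, k²(n−2)+k+1`, each occurring once;
(2) every edge sum `∑_{j=0}^{k} x t (i·k + j)`, for an edge not adjacent to the
root (`0 ≤ i ≤ n−3`), equals `u`;
(3) for every position `p`, the sum `(∑ t, x t p) + c` along the segment joining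
the root vertex to the boundary of the largest polygon equals `u`. -/
def IsDegMagicPolygon (n k : ℕ) (x : Fin k → Fin (k * (n - 2) + 1) → ℕ) (c u : ℕ) : Prop :=
  Function.Injective (degMagicLabels n k x c) ∧
  Set.range (degMagicLabels n k x c) = Set.Icc 1 (k ^ 2 * (n - 2) + k + 1) ∧
  (∀ t : Fin k, ∀ i ∈ Finset.range (n - 2),
    ∑ j ∈ Finset.range (k + 1), x t (Fin.ofNat _ (i * k + j)) = u) ∧
  (∀ p : Fin (k * (n - 2) + 1), (∑ t : Fin k, x t p) + c = u)

open Finset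

theorem Finset.sum_Icc_one_id_mul_two (N : ℕ) : (∑ i ∈ Icc 1 N, i) * 2 = N * (N + 1) := by
  have : ∑ i ∈ Icc 1 N, i = ∑ i ∈ range (N + 1), i := by
    rw [range_eq_Ico, sum_eq_sum_Ico_succ_bot N.succ_pos, zero_add]
    rfl
  rw [this, sum_range_id_mul_two, Nat.add_sub_cancel, mul_comm]

theorem Fintype.sum_mul_two_of_range_eq_Icc {α : Type*} [Fintype α] {f : α → ℕ}
    (hf : Function.Injective f) {N : ℕ} (hrange : Set.range f = Set.Icc 1 N) :
    (∑ a, f a) * 2 = N * (N + 1) := by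
  classical
  have himage : univ.image f = Icc 1 N := by
    rw [← Set.toFinset_range, ← Set.toFinset_Icc]
    simp only [hrange]
  rw [← sum_Icc_one_id_mul_two, ← himage, sum_image fun a _ b _ h => hf h]

theorem sum_degMagicLabels (n k : ℕ) (x : Fin k → Fin (k * (n - 2) + 1) → ℕ) (c : ℕ) :
    ∑ a, degMagicLabels n k x c a = (∑ p, ∑ t, x t p) + c := by
  simp only [degMagicLabels, Fintype.sum_sum_type, Fintype.sum_prod_type, Sum.elim_inl,
    Sum.elim_inr, Finset.univ_unique, sum_singleton]
  rw [sum_comm]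

namespace IsDegMagicPolygon

variable {n k : ℕ} {x : Fin k → Fin (k * (n - 2) + 1) → ℕ} {c u : ℕ}

/-- The labels at positions `0, …, k` of all polygons are summed twice: along the first edges,
giving `k u`, and along the first `k + 1` segments, giving `(k + 1) u` with `c` counted `k + 1`
times. -/
theorem magic_sum_eq (h : IsDegMagicPolygon n k x c u) (hn : 3 ≤ n) : u = (k + 1) * c := by
  obtain ⟨-, -, hedge, hseg⟩ := h
  have hfirst (t : Fin k) : ∑ j ∈ range (k + 1), x t (Fin.ofNat _ j) = u := by
    simpa using hedge t 0 (mem_range.2 (by omega))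
  have key : k * u + (k + 1) * c = (k + 1) * u :=
    calc k * u + (k + 1) * c
        = ∑ j ∈ range (k + 1), ((∑ t, x t (Fin.ofNat _ j)) + c) := by
          rw [sum_add_distrib, sum_comm, sum_congr rfl fun t _ => hfirst t]
          simp
      _ = (k + 1) * u := by
          rw [sum_congr rfl fun j _ => hseg _]
          simp
  linarith

theorem sum_labels_eq (h : IsDegMagicPolygon n k x c u) (hn : 3 ≤ n) :
    (∑ p, ∑ t, x t p) + c = (k ^ 2 * (n - 2) + k + 1) * c := by
  have hsegs : (∑ p, ∑ t, x t p) + (k * (n - 2) + 1) * c = (k * (n - 2) + 1) * u := by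
    simpa [sum_add_distrib, mul_comm] using sum_congr (s₁ := univ) rfl fun p _ => h.2.2.2 p
  rw [h.magic_sum_eq hn] at hsegs
  linarith

theorem two_mul_root_label (h : IsDegMagicPolygon n k x c u) (hn : 3 ≤ n) :
    2 * c = k ^ 2 * (n - 2) + k + 2 := by
  have htotal := Fintype.sum_mul_two_of_range_eq_Icc h.1 h.2.1
  rw [sum_degMagicLabels, h.sum_labels_eq hn, mul_assoc, mul_comm c] at htotal
  exact Nat.eq_of_mul_eq_mul_left (by positivity) htotal

end IsDegMagicPolygon

theorem degMagicPolygon_nonexistence_general (n k : ℕ) (hn : 3 ≤ n)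
    (hne : Even n) (hko : Odd k) :
    ¬ ∃ (x : Fin k → Fin (k * (n - 2) + 1) → ℕ) (c u : ℕ),
      IsDegMagicPolygon n k x c u := by
  rintro ⟨x, c, u, h⟩
  have hodd : Odd (k ^ 2 * (n - 2) + k + 2) :=
    (((hne.tsub even_two).mul_left _).add_odd hko).add_even even_two
  rw [← h.two_mul_root_label hn] at hodd
  exact Nat.not_odd_iff_even.2 (even_two_mul c) hodd

theorem degMagicPolygon_nonexistence (n k : ℕ) (hn : 3 ≤ n) (hk : 1 ≤ k)
    (hne : Even n) (hko : Odd k) :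
    ¬ ∃ (x : Fin k → Fin (k * (n - 2) + 1) → ℕ) (c u : ℕ),
      IsDegMagicPolygon n k x c u :=
  degMagicPolygon_nonexistence_general n k hn hne hko
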